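/- Let v be a valuation on an algebraically closed field K̄ of residue characteristic p > 0 containing a primitive p-th root of unity ζ_p. Suppose h = q^p + ρ is a good part-p-th-power decomposition with t := v(ρ) − v(h) ≥ 0, let γ ∈ K̄^× have valuation v(γ) = min{t, p·v(p)/(p−1)} + v(h), and define q₀ = (1 − ζ_p)γ^{−1/p}q and ρ₀ = γ^{−1}ρ. Then all coefficients of q₀ and ρ₀ have valuation ≥ 0; moreover v(ρ₀) > 0 if and only if t > p·v(p)/(p−1), and v(q₀) > 0 if and only if t < p·v(p)/(p−1). -/

import Mathlib

open Polynomial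
open scoped Classical

/-- An additive ℚ-valued valuation on a field `K`, recorded as a bare function with
the valuation axioms imposed only at nonzero elements (the value at `0` is junk). -/
structure AddVal (K : Type*) [Field K] where
  v : K → ℚ
  map_one : v 1 = 0
  map_mul : ∀ x y : K, x ≠ 0 → y ≠ 0 → v (x * y) = v x + v y
  add_ge : ∀ x y : K, x ≠ 0 → y ≠ 0 → x + y ≠ 0 → min (v x) (v y) ≤ v (x + y)

variable {K : Type*} [Field K]

/-- The Gauss valuation of a polynomial: the minimum of the valuations of its
(nonzero) coefficients, with junk value `0` at the zero polynomial. -/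
noncomputable def AddVal.gauss (w : AddVal K) (h : K[X]) : ℚ :=
  if hh : h = 0 then 0
  else h.support.inf' (Polynomial.support_nonempty.mpr hh) fun i => w.v (h.coeff i)

/-- Gauss valuation valued in `ℚ ∪ {∞}`, taking the value `⊤` at the zero polynomial. -/
noncomputable def AddVal.gaussT (w : AddVal K) (h : K[X]) : WithTop ℚ :=
  if h = 0 then ⊤ else (w.gauss h : WithTop ℚ)

/-- The quantity `t = v(ρ) - v(h) ∈ ℚ ∪ {∞}` attached to a
part-`p`-th-power decomposition `h = q^p + ρ` (it is `⊤` when `ρ = 0`). -/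
noncomputable def AddVal.tdiff (w : AddVal K) (h ρ : K[X]) : WithTop ℚ :=
  if ρ = 0 then ⊤ else ((w.gauss ρ - w.gauss h : ℚ) : WithTop ℚ)

/-- `h = q ^ p + ρ` is a part-`p`-th-power decomposition (`deg q ≤ ⌊deg h / p⌋`). -/
def IsPartDecomp (p : ℕ) (h q ρ : K[X]) : Prop :=
  h = q ^ p + ρ ∧ q.natDegree ≤ h.natDegree / p

/-- The threshold `p·v(p)/(p-1)`. -/
noncomputable def pBound (w : AddVal K) (p : ℕ) : ℚ :=
  (p : ℚ) * w.v (p : K) / ((p : ℚ) - 1)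

/-- A part-`p`-th-power decomposition is good if `t ≥ p·v(p)/(p-1)` or if no
decomposition achieves a strictly larger value of `t = v(ρ) - v(h)`. -/
def IsGoodDecomp (w : AddVal K) (p : ℕ) (h q ρ : K[X]) : Prop :=
  IsPartDecomp p h q ρ ∧
    (((pBound w p : ℚ) : WithTop ℚ) ≤ w.tdiff h ρ ∨
      ∀ q₁ ρ₁ : K[X], IsPartDecomp p h q₁ ρ₁ → w.tdiff h ρ₁ ≤ w.tdiff h ρ)

/-!
Write `v` for the Gauss valuation, which is multiplicative, and `B = p·v(p)/(p-1)`. Since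
`v(γ) = min(t, B) + v(h)`, we get `v(ρ₀) = t - min(t, B)`, and since `p·v(1 - ζ) = B`, also
`p·v(q₀) = B - min(t, B) + (p·v(q) - v(h))`. The ultrametric inequality applied to
`q^p = h - ρ` gives `p·v(q) ≥ v(h)`, with equality when `t > 0`; all claims follow. The value of
`v(1 - ζ)` comes from `∏ (1 - μ) = Φ_p(1) = p` over the `p - 1` primitive roots `μ`, all of which
satisfy `v(1 - μ) = v(1 - ζ)`.
-/

namespace AddValuation

section Ring

variable {R Γ : Type*} [Ring R] [LinearOrderedAddCommMonoidWithTop Γ] (v : AddValuation R Γ)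

theorem le_map_of_eq_add {x y z : R} (hxyz : x = y + z) (hz : v x ≤ v z) : v x ≤ v y :=
  calc v x = min (v x) (v z) := (min_eq_left hz).symm
    _ ≤ v (x - z) := v.map_sub x z
    _ = v y := by rw [hxyz, add_sub_cancel_right]

theorem map_eq_of_eq_add {x y z : R} (hxyz : x = y + z) (hz : v x < v z) : v y = v x := by
  rw [← v.map_sub_eq_of_lt_left hz, hxyz, add_sub_cancel_right]

theorem map_eq_zero_of_pow_eq_one {ζ : R} {n : ℕ} (hn : n ≠ 0) (hζ : ζ ^ n = 1) :
    v ζ = 0 := by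
  have hn1 : 1 ≤ n := Nat.one_le_iff_ne_zero.2 hn
  have h : n • v ζ = 0 := by rw [← v.map_pow, hζ, v.map_one]
  rcases le_total (v ζ) 0 with ha | ha
  · refine le_antisymm ha ?_
    simpa [h] using nsmul_le_nsmul_left_of_nonpos ha hn1
  · refine le_antisymm ?_ ha
    simpa [h] using nsmul_le_nsmul_left ha hn1

theorem map_one_sub_le_map_one_sub_pow {ξ : R} (hξ : 0 ≤ v ξ) (n : ℕ) :
    v (1 - ξ) ≤ v (1 - ξ ^ n) := by
  rw [← geom_sum_mul_neg, v.map_mul]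
  refine le_add_of_nonneg_left (v.map_le_sum fun i _ => ?_)
  rw [v.map_pow]
  exact nsmul_nonneg hξ i

end Ring

section CommRing

variable {R Γ : Type*} [CommRing R] [LinearOrderedAddCommMonoidWithTop Γ] (v : AddValuation R Γ)

theorem map_prod {ι : Type*} (s : Finset ι) (f : ι → R) :
    v (∏ i ∈ s, f i) = ∑ i ∈ s, v (f i) := by
  induction s using Finset.cons_induction with
  | empty => simp
  | cons i s hi ih => rw [Finset.prod_cons, Finset.sum_cons, v.map_mul, ih]

theorem map_one_sub_eq_of_isPrimitiveRoot [IsDomain R] {ζ μ : R} {n : ℕ} [NeZero n]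
    (hζ : IsPrimitiveRoot ζ n) (hμ : IsPrimitiveRoot μ n) : v (1 - ζ) = v (1 - μ) := by
  obtain ⟨i, -, rfl⟩ := hζ.eq_pow_of_pow_eq_one hμ.pow_eq_one
  obtain ⟨j, -, hj⟩ := hμ.eq_pow_of_pow_eq_one hζ.pow_eq_one
  have hv (ξ : R) (hξ : IsPrimitiveRoot ξ n) : 0 ≤ v ξ :=
    (v.map_eq_zero_of_pow_eq_one (NeZero.ne n) hξ.pow_eq_one).ge
  refine le_antisymm (v.map_one_sub_le_map_one_sub_pow (hv ζ hζ) i) ?_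
  simpa [hj] using v.map_one_sub_le_map_one_sub_pow (hv _ hμ) j

theorem nsmul_map_one_sub_eq_map_prime [IsDomain R] {p : ℕ} [Fact p.Prime] {ζ : R}
    (hζ : IsPrimitiveRoot ζ p) : (p - 1) • v (1 - ζ) = v p := by
  have hp : eval 1 (cyclotomic p R) = ∏ μ ∈ primitiveRoots p R, (1 - μ) := by
    simp [cyclotomic_eq_prod_X_sub_primitiveRoots hζ, eval_prod]
  have hcard : (primitiveRoots p R).card = p - 1 := by
    rw [hζ.card_primitiveRoots, Nat.totient_prime Fact.out]
  rw [← eval_one_cyclotomic_prime (R := R), hp, v.map_prod,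
    Finset.sum_congr rfl fun μ hμ => v.map_one_sub_eq_of_isPrimitiveRoot
      ((mem_primitiveRoots (Fact.out : p.Prime).pos).1 hμ) hζ,
    Finset.sum_const, hcard]

end CommRing

end AddValuation

namespace AddVal

-- `exp (-·)` turns `w` into a nonarchimedean absolute value, so that Mathlib's Gauss lemma
-- `Polynomial.gaussNorm_mul` applies to `gaussT`.
noncomputable def expNeg : WithTop ℚ → ℝ
  | ⊤ => 0
  | (a : ℚ) => Real.exp (-a)

@[simp] theorem expNeg_top : expNeg ⊤ = 0 := rfl

@[simp] theorem expNeg_coe (a : ℚ) : expNeg a = Real.exp (-a) := rfl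

theorem expNeg_add (a b : WithTop ℚ) : expNeg (a + b) = expNeg a * expNeg b := by
  induction a <;> induction b <;> simp [← WithTop.coe_add, Real.exp_add, mul_comm]

theorem expNeg_nonneg (a : WithTop ℚ) : 0 ≤ expNeg a := by
  induction a <;> simp [Real.exp_nonneg]

theorem expNeg_eq_zero {a : WithTop ℚ} : expNeg a = 0 ↔ a = ⊤ := by
  induction a <;> simp [Real.exp_ne_zero]

theorem strictAnti_expNeg : StrictAnti expNeg := by
  intro a b hab
  induction b with
  | top => lift a to ℚ using hab.ne; simpa using Real.exp_pos _
  | coe b =>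
    lift a to ℚ using (hab.trans (WithTop.coe_lt_top b)).ne
    simpa [Real.exp_lt_exp] using WithTop.coe_lt_coe.1 hab

variable (w : AddVal K)

noncomputable def toAddValuation : AddValuation K (WithTop ℚ) :=
  AddValuation.of (fun x => if x = 0 then ⊤ else (w.v x : WithTop ℚ)) (if_pos rfl)
    (by simp [w.map_one])
    (fun x y => by
      rcases eq_or_ne x 0 with rfl | hx
      · simp
      rcases eq_or_ne y 0 with rfl | hy
      · simp
      rcases eq_or_ne (x + y) 0 with hxy | hxy
      · simp [hxy]
      rw [if_neg hx, if_neg hy, if_neg hxy, ← WithTop.coe_min, WithTop.coe_le_coe]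
      exact w.add_ge x y hx hy hxy)
    (fun x y => by
      rcases eq_or_ne x 0 with rfl | hx
      · simp
      rcases eq_or_ne y 0 with rfl | hy
      · simp
      simp [hx, hy, w.map_mul x y hx hy])

theorem toAddValuation_of_ne_zero {x : K} (hx : x ≠ 0) : w.toAddValuation x = w.v x := by
  simp [toAddValuation, hx]

theorem expNeg_map_add_le_max (x y : K) :
    expNeg (w.toAddValuation (x + y)) ≤
      max (expNeg (w.toAddValuation x)) (expNeg (w.toAddValuation y)) := by
  rw [← strictAnti_expNeg.antitone.map_min]
  exact strictAnti_expNeg.antitone (w.toAddValuation.map_add x y)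

noncomputable def toAbsoluteValue : AbsoluteValue K ℝ where
  toFun x := expNeg (w.toAddValuation x)
  map_mul' x y := by simp only [AddValuation.map_mul, expNeg_add]
  nonneg' x := expNeg_nonneg _
  eq_zero' x := by simp [expNeg_eq_zero]
  add_le' x y := (w.expNeg_map_add_le_max x y).trans
    (max_le_add_of_nonneg (expNeg_nonneg _) (expNeg_nonneg _))

theorem isNonarchimedean_toAbsoluteValue : IsNonarchimedean w.toAbsoluteValue :=
  w.expNeg_map_add_le_max

theorem toAbsoluteValue_apply (x : K) : w.toAbsoluteValue x = expNeg (w.toAddValuation x) := rfl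

theorem gaussT_le_coeff (f : K[X]) (i : ℕ) : w.gaussT f ≤ w.toAddValuation (f.coeff i) := by
  by_cases hi : f.coeff i = 0
  · simp [hi]
  have hf : f ≠ 0 := fun hf => hi (by simp [hf])
  rw [gaussT, if_neg hf, gauss, dif_neg hf, w.toAddValuation_of_ne_zero hi, WithTop.coe_le_coe]
  exact Finset.inf'_le _ (mem_support_iff.2 hi)

theorem exists_gaussT_eq_coeff (f : K[X]) : ∃ i, w.gaussT f = w.toAddValuation (f.coeff i) := by
  by_cases hf : f = 0
  · exact ⟨0, by simp [gaussT, hf]⟩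
  obtain ⟨i, hi, hmin⟩ := Finset.exists_mem_eq_inf' (support_nonempty.2 hf)
    fun i => w.v (f.coeff i)
  refine ⟨i, ?_⟩
  rw [gaussT, if_neg hf, gauss, dif_neg hf, hmin,
    w.toAddValuation_of_ne_zero (mem_support_iff.1 hi)]

theorem gaussNorm_eq_expNeg_gaussT (f : K[X]) :
    f.gaussNorm w.toAbsoluteValue 1 = expNeg (w.gaussT f) := by
  obtain ⟨i, hi⟩ := f.exists_eq_gaussNorm w.toAbsoluteValue 1
  obtain ⟨j, hj⟩ := w.exists_gaussT_eq_coeff f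
  refine le_antisymm ?_ ?_
  · rw [hi, one_pow, mul_one, toAbsoluteValue_apply]
    exact strictAnti_expNeg.antitone (w.gaussT_le_coeff f i)
  · simpa [hj, toAbsoluteValue_apply] using f.le_gaussNorm w.toAbsoluteValue zero_le_one j

theorem gaussT_C (c : K) : w.gaussT (C c) = w.toAddValuation c := by
  refine strictAnti_expNeg.injective ?_
  rw [← gaussNorm_eq_expNeg_gaussT, gaussNorm_C, toAbsoluteValue_apply]

theorem gaussT_mul (f g : K[X]) : w.gaussT (f * g) = w.gaussT f + w.gaussT g := by
  refine strictAnti_expNeg.injective ?_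
  rw [expNeg_add, ← gaussNorm_eq_expNeg_gaussT, ← gaussNorm_eq_expNeg_gaussT,
    ← gaussNorm_eq_expNeg_gaussT, gaussNorm_mul w.isNonarchimedean_toAbsoluteValue one_pos]

noncomputable def gaussValuation : AddValuation K[X] (WithTop ℚ) :=
  AddValuation.of w.gaussT (by simp [gaussT]) (by rw [← C_1, gaussT_C, AddValuation.map_one])
    (fun f g => by
      obtain ⟨i, hi⟩ := w.exists_gaussT_eq_coeff (f + g)
      rw [hi, coeff_add]
      exact (min_le_min (w.gaussT_le_coeff f i) (w.gaussT_le_coeff g i)).trans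
        (AddValuation.map_add _ _ _))
    w.gaussT_mul

@[simp] theorem gaussValuation_apply (f : K[X]) : w.gaussValuation f = w.gaussT f := rfl

theorem v_inv {x : K} (hx : x ≠ 0) : w.v x⁻¹ = -w.v x := by
  have := w.toAddValuation.map_inv (x := x)
  rw [w.toAddValuation_of_ne_zero hx, w.toAddValuation_of_ne_zero (inv_ne_zero hx)] at this
  exact_mod_cast this

theorem v_pow {x : K} (hx : x ≠ 0) (n : ℕ) : w.v (x ^ n) = n * w.v x := by
  have := w.toAddValuation.map_pow x n
  rwa [w.toAddValuation_of_ne_zero hx, w.toAddValuation_of_ne_zero (pow_ne_zero n hx),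
    ← WithTop.coe_nsmul, WithTop.coe_eq_coe, nsmul_eq_mul] at this

theorem gaussT_C_mul {c : K} (hc : c ≠ 0) (f : K[X]) :
    w.gaussT (C c * f) = w.v c + w.gaussT f := by
  rw [gaussT_mul, gaussT_C, w.toAddValuation_of_ne_zero hc]

theorem gaussT_of_ne_zero {f : K[X]} (hf : f ≠ 0) : w.gaussT f = w.gauss f := if_neg hf

theorem gaussT_pow_of_ne_zero {f : K[X]} (hf : f ≠ 0) (n : ℕ) :
    w.gaussT (f ^ n) = ((n * w.gauss f : ℚ) : WithTop ℚ) := by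
  rw [← gaussValuation_apply, AddValuation.map_pow, gaussValuation_apply, w.gaussT_of_ne_zero hf,
    ← WithTop.coe_nsmul, nsmul_eq_mul]

theorem mul_v_one_sub_eq_pBound {p : ℕ} (hp : p.Prime) {ζ : K} (hζ : IsPrimitiveRoot ζ p) :
    p * w.v (1 - ζ) = pBound w p := by
  have := Fact.mk hp
  have hp0 : (p : K) ≠ 0 := (hζ.neZero').out
  have hζ1 : 1 - ζ ≠ 0 := sub_ne_zero.2 (hζ.ne_one hp.one_lt).symm
  have h := w.toAddValuation.nsmul_map_one_sub_eq_map_prime hζ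
  rw [w.toAddValuation_of_ne_zero hζ1, w.toAddValuation_of_ne_zero hp0, ← WithTop.coe_nsmul,
    WithTop.coe_eq_coe, nsmul_eq_mul, Nat.cast_pred hp.pos] at h
  have hp1 : (p : ℚ) - 1 ≠ 0 := sub_ne_zero.2 (by exact_mod_cast hp.one_lt.ne')
  rw [pBound, ← h]
  field_simp

theorem pBound_pos {p : ℕ} (hp : p.Prime) (hvp : 0 < w.v (p : K)) : 0 < pBound w p := by
  have hp1 : (1 : ℚ) < p := by exact_mod_cast hp.one_lt
  exact div_pos (mul_pos (by linarith) hvp) (by linarith)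

-- The paper's `min(t, B)` with `t = w.tdiff h ρ`, as a rational number.
noncomputable def minTdiff (h ρ : K[X]) (B : ℚ) : ℚ :=
  if ρ = 0 then B else min (w.gauss ρ - w.gauss h) B

theorem nonneg_gaussT_C_inv_mul_and_pos_iff {h ρ : K[X]} {B : ℚ} {γ : K} (hγ : γ ≠ 0)
    (hvγ : w.v γ = w.minTdiff h ρ B + w.gauss h) :
    0 ≤ w.gaussT (C γ⁻¹ * ρ) ∧
      (0 < w.gaussT (C γ⁻¹ * ρ) ↔ (B : WithTop ℚ) < w.tdiff h ρ) := by
  rcases eq_or_ne ρ 0 with rfl | hρ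
  · simp [gaussT, tdiff]
  rw [w.gaussT_C_mul (inv_ne_zero hγ), w.v_inv hγ, w.gaussT_of_ne_zero hρ, tdiff, if_neg hρ,
    hvγ, minTdiff, if_neg hρ, ← WithTop.coe_add]
  norm_cast
  rw [show -(min (w.gauss ρ - w.gauss h) B + w.gauss h) + w.gauss ρ
    = (w.gauss ρ - w.gauss h) - min (w.gauss ρ - w.gauss h) B by ring,
    sub_nonneg, sub_pos, min_lt_iff]
  simp

-- With `vh, g, a` the valuations of `h, ρ, q`, and `c` that of the scalar, `c + a` is `v(q₀)`.
theorem nonneg_add_and_pos_iff {p B vh g a c : ℚ} (hp : 0 < p) (hB : 0 < B) (hg : vh ≤ g)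
    (ha : vh ≤ p * a) (ha' : vh < g → p * a = vh) (hc : p * c = B - (min (g - vh) B + vh)) :
    0 ≤ c + a ∧ (0 < c + a ↔ g - vh < B) := by
  rw [← mul_nonneg_iff_of_pos_left hp, ← mul_pos_iff_of_pos_left hp, mul_add, hc]
  rcases hg.lt_or_eq with hg | rfl
  · rw [ha' hg, show B - (min (g - vh) B + vh) + vh = B - min (g - vh) B by ring, sub_nonneg,
      sub_pos, min_lt_iff]
    simp
  · simp only [sub_self, min_eq_left hB.le, zero_add, hB, iff_true]
    constructor <;> linarith

theorem nonneg_gaussT_C_mul_and_pos_iff {p : ℕ} (hp : 0 < p) {B : ℚ} (hB : 0 < B)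
    {h q ρ : K[X]} (hh : h ≠ 0) (hdec : h = q ^ p + ρ) (ht0 : 0 ≤ w.tdiff h ρ)
    {c γ : K} (hc : c ≠ 0) (hvc : p * w.v c = B - w.v γ)
    (hvγ : w.v γ = w.minTdiff h ρ B + w.gauss h) :
    0 ≤ w.gaussT (C c * q) ∧ (0 < w.gaussT (C c * q) ↔ w.tdiff h ρ < B) := by
  rcases eq_or_ne q 0 with rfl | hq
  · obtain rfl : ρ = h := by simpa [zero_pow hp.ne'] using hdec.symm
    simp [gaussT, tdiff, hh, hB]
  have hp' : (0 : ℚ) < p := by exact_mod_cast hp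
  have hGh : w.gaussValuation h = w.gauss h := w.gaussT_of_ne_zero hh
  have hGq : w.gaussValuation (q ^ p) = ((p * w.gauss q : ℚ) : WithTop ℚ) :=
    w.gaussT_pow_of_ne_zero hq p
  rw [w.gaussT_C_mul hc, w.gaussT_of_ne_zero hq, ← WithTop.coe_add]
  rcases eq_or_ne ρ 0 with rfl | hρ
  · have hpa : p * w.gauss q = w.gauss h := by
      have := congrArg w.gaussValuation hdec
      rw [add_zero, hGq, hGh] at this
      exact_mod_cast this.symm
    have hsum : (p : ℚ) * (w.v c + w.gauss q) = 0 := by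
      rw [mul_add, hvc, hpa, hvγ, minTdiff, if_pos rfl]
      ring
    simp [(mul_eq_zero.1 hsum).resolve_left hp'.ne', tdiff]
  have hGρ : w.gaussValuation ρ = w.gauss ρ := w.gaussT_of_ne_zero hρ
  rw [tdiff, if_neg hρ] at ht0 ⊢
  have hg : w.gauss h ≤ w.gauss ρ := by
    have : (0 : ℚ) ≤ w.gauss ρ - w.gauss h := by exact_mod_cast ht0
    linarith
  have ha : w.gauss h ≤ p * w.gauss q := by
    have := w.gaussValuation.le_map_of_eq_add hdec (by rw [hGh, hGρ]; exact_mod_cast hg)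
    rwa [hGh, hGq, WithTop.coe_le_coe] at this
  have ha' (hlt : w.gauss h < w.gauss ρ) : p * w.gauss q = w.gauss h := by
    have := w.gaussValuation.map_eq_of_eq_add hdec (by rw [hGh, hGρ]; exact_mod_cast hlt)
    rwa [hGh, hGq, WithTop.coe_eq_coe] at this
  have hc' : p * w.v c = B - (min (w.gauss ρ - w.gauss h) B + w.gauss h) := by
    rw [hvc, hvγ, minTdiff, if_neg hρ]
  exact_mod_cast nonneg_add_and_pos_iff hp' hB hg ha ha' hc'

end AddVal

theorem statement19_general {K : Type*} [Field K] (w : AddVal K) (p : ℕ)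
    (hp : p.Prime) (ζ : K) (hζ : IsPrimitiveRoot ζ p) (hvp : 0 < w.v (p : K))
    (h q ρ : K[X]) (hh : h ≠ 0) (hgood : IsGoodDecomp w p h q ρ)
    (ht0 : (0 : WithTop ℚ) ≤ w.tdiff h ρ)
    (γ δ : K) (hγ : γ ≠ 0) (hδ : δ ^ p = γ)
    (hvγ : w.v γ =
      (if ρ = 0 then pBound w p else min (w.gauss ρ - w.gauss h) (pBound w p))
        + w.gauss h) :
    (0 : WithTop ℚ) ≤ w.gaussT (C ((1 - ζ) * δ⁻¹) * q) ∧
    (0 : WithTop ℚ) ≤ w.gaussT (C γ⁻¹ * ρ) ∧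
    ((0 : WithTop ℚ) < w.gaussT (C γ⁻¹ * ρ) ↔
      ((pBound w p : ℚ) : WithTop ℚ) < w.tdiff h ρ) ∧
    ((0 : WithTop ℚ) < w.gaussT (C ((1 - ζ) * δ⁻¹) * q) ↔
      w.tdiff h ρ < ((pBound w p : ℚ) : WithTop ℚ)) := by
  obtain ⟨⟨hdec, -⟩, -⟩ := hgood
  have hδ0 : δ ≠ 0 := by rintro rfl; exact hγ (by rw [← hδ, zero_pow hp.ne_zero])
  have hζ1 : 1 - ζ ≠ 0 := sub_ne_zero.2 (hζ.ne_one hp.one_lt).symm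
  have hvc : p * w.v ((1 - ζ) * δ⁻¹) = pBound w p - w.v γ := by
    rw [w.map_mul _ _ hζ1 (inv_ne_zero hδ0), mul_add, w.mul_v_one_sub_eq_pBound hp hζ,
      w.v_inv hδ0, ← hδ, w.v_pow hδ0]
    ring
  obtain ⟨hq₀, hq₀_pos⟩ := w.nonneg_gaussT_C_mul_and_pos_iff hp.pos (w.pBound_pos hp hvp) hh
    hdec ht0 (mul_ne_zero hζ1 (inv_ne_zero hδ0)) hvc hvγ
  obtain ⟨hρ₀, hρ₀_pos⟩ := w.nonneg_gaussT_C_inv_mul_and_pos_iff hγ hvγ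
  exact ⟨hq₀, hρ₀, hρ₀_pos, hq₀_pos⟩

/-- Proposition 5.11(a),(b)(i),(ii): in residue characteristic `p`, given
a good part-`p`-th-power decomposition `h = q^p + ρ` with `t = v(ρ) - v(h) ≥ 0`, a
scalar `γ` with `v(γ) = min{t, p·v(p)/(p-1)} + v(h)` and a `p`-th root `δ` of `γ`, the
polynomials `q₀ = (1 - ζ_p)·γ^{-1/p}·q` and `ρ₀ = γ^{-1}·ρ` have all coefficients of
valuation `≥ 0`; moreover `v(ρ₀) > 0` iff `t > p·v(p)/(p-1)`, and `v(q₀) > 0` iff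
`t < p·v(p)/(p-1)`. -/
theorem statement19 {K : Type*} [Field K] [CharZero K] (w : AddVal K) (p : ℕ)
    (hp : p.Prime) (ζ : K) (hζ : IsPrimitiveRoot ζ p) (hvp : 0 < w.v (p : K))
    (h q ρ : K[X]) (hh : h ≠ 0) (hgood : IsGoodDecomp w p h q ρ)
    (ht0 : (0 : WithTop ℚ) ≤ w.tdiff h ρ)
    (γ δ : K) (hγ : γ ≠ 0) (hδ : δ ^ p = γ)
    (hvγ : w.v γ =
      (if ρ = 0 then pBound w p else min (w.gauss ρ - w.gauss h) (pBound w p))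
        + w.gauss h) :
    (0 : WithTop ℚ) ≤ w.gaussT (C ((1 - ζ) * δ⁻¹) * q) ∧
    (0 : WithTop ℚ) ≤ w.gaussT (C γ⁻¹ * ρ) ∧
    ((0 : WithTop ℚ) < w.gaussT (C γ⁻¹ * ρ) ↔
      ((pBound w p : ℚ) : WithTop ℚ) < w.tdiff h ρ) ∧
    ((0 : WithTop ℚ) < w.gaussT (C ((1 - ζ) * δ⁻¹) * q) ↔
      w.tdiff h ρ < ((pBound w p : ℚ) : WithTop ℚ)) :=
  statement19_general w p hp ζ hζ hvp h q ρ hh hgood ht0 γ δ hγ hδ hvγ
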